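/- Theorem E.1 (characterization of the uniform linear-in-means model with variable group sizes): A dataset {p^N}_{N∈𝒩} is consistent with the uniform linear-in-means model if and only if it satisfies cyclic constancy* (for every cycle (i_k, j_k, N_k)_{k=1}^K, Σ_{k=1}^K (1+|N_k|)(p_{i_k}^{N_k} − p_{j_k}^{N_k}) = 0), symmetric peer effects* (for all N, M ∈ 𝒩 with i ∈ N ∩ M, p_i^N − Σ_{j∈N∖M}(p_j^N − p_i^N) = p_i^M − Σ_{k∈M∖N}(p_k^M − p_i^M) − ((|N|−|M|)/(1+|N|))·Σ_{l∈N∩M}(p_l^M − p_i^M)), and bounded total peer effects (for all N ∈ 𝒩 and i ∈ N, p_i^N ≥ Σ_{j∈N∖{i}}(p_j^N − p_i^N) coordinatewise). -/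

import Mathlib

open Finset
open scoped Classical

noncomputable section

/-- The simplex Δ(X) of probability vectors on a finite set X. -/
def simplex (X : Type*) [Fintype X] : Set (X → ℝ) :=
  {v | (∀ x, 0 ≤ v x) ∧ (∑ x, v x) = 1}

/-- Consistency with the uniform linear-in-means model (ULM). -/
def ULMConsistent {X A : Type*} [Fintype X] [DecidableEq A]
    (𝒩 : Finset (Finset A)) (p : Finset A → A → X → ℝ) : Prop :=
  ∃ v : A → X → ℝ, (∀ i, v i ∈ simplex X) ∧
    ∀ N ∈ 𝒩, ∀ i ∈ N,
      p N i = ((N.card : ℝ))⁻¹ • v i + ∑ j ∈ N.erase i, ((N.card : ℝ))⁻¹ • p N j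

/-- Cyclic constancy*: size-weighted peer effects sum to zero around every cycle of
influence. -/
def CyclicallyConstantStar {X A : Type*} [Fintype X]
    (𝒩 : Finset (Finset A)) (p : Finset A → A → X → ℝ) : Prop :=
  ∀ (K : ℕ) (ii jj : Fin (K + 1) → A) (Ns : Fin (K + 1) → Finset A),
    (∀ k, Ns k ∈ 𝒩) → (∀ k, ii k ∈ Ns k) → (∀ k, jj k ∈ Ns k) →
    (∀ k, jj k = ii (k + 1)) →
    (∑ k, ((1 : ℝ) + (Ns k).card) • (p (Ns k) (ii k) - p (Ns k) (jj k))) = 0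

/-- Symmetric peer effects*. -/
def SymmetricPeerEffectsStar {X A : Type*} [Fintype X] [DecidableEq A]
    (𝒩 : Finset (Finset A)) (p : Finset A → A → X → ℝ) : Prop :=
  ∀ N ∈ 𝒩, ∀ M ∈ 𝒩, ∀ i : A, i ∈ N → i ∈ M →
    p N i - ∑ j ∈ N \ M, (p N j - p N i) =
      p M i - ∑ k ∈ M \ N, (p M k - p M i) -
        (((N.card : ℝ) - M.card) / (1 + N.card)) • ∑ l ∈ N ∩ M, (p M l - p M i)

/-- Bounded total peer effects. -/
def BoundedTotalPeerEffects {X A : Type*} [Fintype X] [DecidableEq A]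
    (𝒩 : Finset (Finset A)) (p : Finset A → A → X → ℝ) : Prop :=
  ∀ N ∈ 𝒩, ∀ i ∈ N, ∀ x : X, (∑ j ∈ N.erase i, (p N j x - p N i x)) ≤ p N i x

/-!
Within a group `N` the ULM equation for agent `i` reads `(1 + |N|) p_i^N = v_i + ∑_{j ∈ N} p_j^N`,
so the only candidate for `v_i` is the type revealed by `N`,
`w_i^N = p_i^N - ∑_{j ∈ N} (p_j^N - p_i^N)`. The dataset is ULM-consistent iff `w_i^N` is
independent of `N` and lies in the simplex. It always sums to one, and its nonnegativity is bounded
total peer effects. Since `w_j^N - w_i^N = (1 + |N|) (p_j^N - p_i^N)`, cyclic constancy* says that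
revealed types telescope around cycles; on two-cycles it makes these weighted differences agree
across groups, and given that, symmetric peer effects* is a rearrangement of `w_i^N = w_i^M`.
-/

theorem Fin.sum_sub_add_one_eq_zero {E : Type*} [AddCommGroup E] {K : ℕ} (f : Fin (K + 1) → E) :
    ∑ k, (f k - f (k + 1)) = 0 := by
  rw [Finset.sum_sub_distrib, sub_eq_zero]
  exact (Equiv.sum_comp (Equiv.addRight 1) f).symm

theorem simplex_nonempty (X : Type*) [Fintype X] [Nonempty X] : (simplex X).Nonempty :=
  ⟨_, single_mem_stdSimplex ℝ (Classical.arbitrary X)⟩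

section RevealedType

variable {A E : Type*} [AddCommGroup E] [Module ℝ E]

def revealedType (p : Finset A → A → E) (N : Finset A) (i : A) : E :=
  p N i - ∑ j ∈ N, (p N j - p N i)

theorem revealedType_eq (p : Finset A → A → E) (N : Finset A) (i : A) :
    revealedType p N i = ((1 : ℝ) + N.card) • p N i - ∑ j ∈ N, p N j := by
  rw [revealedType, sum_sub_distrib, sum_const, ← Nat.cast_smul_eq_nsmul ℝ]
  module

theorem revealedType_sub_revealedType (p : Finset A → A → E) (N : Finset A) (i j : A) :
    revealedType p N j - revealedType p N i = ((1 : ℝ) + N.card) • (p N j - p N i) := by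
  rw [revealedType_eq, revealedType_eq]
  module

theorem ulm_eq_iff_eq_revealedType [DecidableEq A] {p : Finset A → A → E} {N : Finset A}
    {i : A} (hi : i ∈ N) (v : E) :
    p N i = ((N.card : ℝ))⁻¹ • v + ∑ j ∈ N.erase i, ((N.card : ℝ))⁻¹ • p N j ↔
      v = revealedType p N i := by
  have hN : (N.card : ℝ) ≠ 0 := Nat.cast_ne_zero.mpr (card_ne_zero_of_mem hi)
  rw [← smul_sum, ← smul_add, eq_inv_smul_iff₀ hN, revealedType_eq, ← add_sum_erase N _ hi]
  constructor <;> intro h <;> linear_combination (norm := module) -h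

theorem peerEffectsStar_eq_iff_revealedType_eq [DecidableEq A] {p : Finset A → A → E}
    {N M : Finset A} {i : A}
    (hpair : ∀ j ∈ N ∩ M,
      ((1 : ℝ) + N.card) • (p N j - p N i) = ((1 : ℝ) + M.card) • (p M j - p M i)) :
    p N i - ∑ j ∈ N \ M, (p N j - p N i) =
        p M i - ∑ k ∈ M \ N, (p M k - p M i) -
          (((N.card : ℝ) - M.card) / (1 + N.card)) • ∑ l ∈ N ∩ M, (p M l - p M i) ↔
      revealedType p N i = revealedType p M i := by
  set T := ∑ l ∈ N ∩ M, (p M l - p M i)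
  have hN : (1 : ℝ) + N.card ≠ 0 := by positivity
  have hcommon : ∑ j ∈ N ∩ M, (p N j - p N i) = ((1 + M.card : ℝ) / (1 + N.card)) • T := by
    rw [smul_sum]
    refine sum_congr rfl fun j hj => ?_
    rw [div_eq_inv_mul, mul_smul, eq_inv_smul_iff₀ hN, hpair j hj]
  have hrevN : revealedType p N i =
      p N i - ∑ j ∈ N \ M, (p N j - p N i) - ((1 + M.card : ℝ) / (1 + N.card)) • T := by
    rw [revealedType, ← sum_inter_add_sum_sdiff N M, hcommon]
    abel
  have hrevM : revealedType p M i = p M i - ∑ k ∈ M \ N, (p M k - p M i) - T := by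
    rw [revealedType, ← sum_inter_add_sum_sdiff M N, inter_comm]
    abel
  have hcoeff : ((N.card : ℝ) - M.card) / (1 + N.card) = 1 - (1 + M.card) / (1 + N.card) := by
    field_simp
    ring
  rw [hrevN, hrevM, hcoeff, sub_smul, one_smul]
  constructor <;> intro h <;> linear_combination (norm := module) h

end RevealedType

section Characterization

variable {X A : Type*} [Fintype X] {𝒩 : Finset (Finset A)} {p : Finset A → A → X → ℝ}

theorem ulmConsistent_iff_exists_eq_revealedType [DecidableEq A] :
    ULMConsistent 𝒩 p ↔
      ∃ v : A → X → ℝ, (∀ i, v i ∈ simplex X) ∧ ∀ N ∈ 𝒩, ∀ i ∈ N, v i = revealedType p N i :=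
  exists_congr fun v => and_congr_right fun _ =>
    forall₂_congr fun _ _ => forall₂_congr fun _ hi => ulm_eq_iff_eq_revealedType hi (v _)

theorem boundedTotalPeerEffects_iff [DecidableEq A] :
    BoundedTotalPeerEffects 𝒩 p ↔ ∀ N ∈ 𝒩, ∀ i ∈ N, ∀ x, 0 ≤ revealedType p N i x := by
  refine forall₂_congr fun N _ => forall₂_congr fun i hi => forall_congr' fun x => ?_
  rw [revealedType, Pi.sub_apply, sub_nonneg, Finset.sum_apply,
    sum_erase N (f := fun j => p N j x - p N i x) (sub_self _)]
  simp only [Pi.sub_apply]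

theorem sum_revealedType_apply {N : Finset A} {i : A} (hi : i ∈ N)
    (hp : ∀ j ∈ N, ∑ x, p N j x = 1) : ∑ x, revealedType p N i x = 1 := by
  simp only [revealedType_eq, Pi.sub_apply, Pi.smul_apply, Finset.sum_apply, smul_eq_mul,
    sum_sub_distrib, ← mul_sum]
  rw [sum_comm, sum_congr rfl hp, hp i hi, sum_const, nsmul_one]
  ring

theorem cyclicallyConstantStar_of_eq_revealedType {v : A → X → ℝ}
    (hv : ∀ N ∈ 𝒩, ∀ i ∈ N, v i = revealedType p N i) : CyclicallyConstantStar 𝒩 p := by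
  intro K ii jj Ns hNs hii hjj hcyc
  calc ∑ k, ((1 : ℝ) + (Ns k).card) • (p (Ns k) (ii k) - p (Ns k) (jj k))
      = ∑ k, (v (ii k) - v (ii (k + 1))) := sum_congr rfl fun k _ => by
        rw [← revealedType_sub_revealedType, ← hv _ (hNs k) _ (hii k),
          ← hv _ (hNs k) _ (hjj k), hcyc k]
    _ = 0 := Fin.sum_sub_add_one_eq_zero _

theorem CyclicallyConstantStar.smul_sub_eq (h : CyclicallyConstantStar 𝒩 p) {N M : Finset A}
    (hN : N ∈ 𝒩) (hM : M ∈ 𝒩) {i j : A} (hiN : i ∈ N) (hiM : i ∈ M) (hjN : j ∈ N)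
    (hjM : j ∈ M) :
    ((1 : ℝ) + N.card) • (p N j - p N i) = ((1 : ℝ) + M.card) • (p M j - p M i) := by
  have h2 := h 1 ![j, i] ![i, j] ![N, M]
    (fun k => by fin_cases k <;> assumption) (fun k => by fin_cases k <;> assumption)
    (fun k => by fin_cases k <;> assumption) (fun k => by fin_cases k <;> rfl)
  rw [Fin.sum_univ_two] at h2
  simp only [Matrix.cons_val_zero, Matrix.cons_val_one, Matrix.cons_val_fin_one] at h2
  linear_combination (norm := module) h2

theorem symmetricPeerEffectsStar_of_eq_revealedType [DecidableEq A] {v : A → X → ℝ}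
    (hv : ∀ N ∈ 𝒩, ∀ i ∈ N, v i = revealedType p N i) : SymmetricPeerEffectsStar 𝒩 p := by
  intro N hN M hM i hiN hiM
  refine (peerEffectsStar_eq_iff_revealedType_eq fun j hj => ?_).mpr ?_
  · obtain ⟨hjN, hjM⟩ := mem_inter.mp hj
    rw [← revealedType_sub_revealedType, ← revealedType_sub_revealedType, ← hv N hN j hjN,
      ← hv N hN i hiN, ← hv M hM j hjM, ← hv M hM i hiM]
  · rw [← hv N hN i hiN, ← hv M hM i hiM]

theorem CyclicallyConstantStar.revealedType_eq [DecidableEq A] (hcc : CyclicallyConstantStar 𝒩 p)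
    (hspe : SymmetricPeerEffectsStar 𝒩 p) {N M : Finset A} (hN : N ∈ 𝒩) (hM : M ∈ 𝒩) {i : A}
    (hiN : i ∈ N) (hiM : i ∈ M) : revealedType p N i = revealedType p M i :=
  (peerEffectsStar_eq_iff_revealedType_eq fun _ hj =>
    hcc.smul_sub_eq hN hM hiN hiM (mem_inter.mp hj).1 (mem_inter.mp hj).2).mp
      (hspe N hN M hM i hiN hiM)

theorem ulmConsistent_of_revealedType_mem_simplex [DecidableEq A] [Nonempty X]
    (hwd : ∀ N ∈ 𝒩, ∀ M ∈ 𝒩, ∀ i ∈ N, i ∈ M → revealedType p N i = revealedType p M i)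
    (hmem : ∀ N ∈ 𝒩, ∀ i ∈ N, revealedType p N i ∈ simplex X) : ULMConsistent 𝒩 p := by
  have hext : ∀ i, ∃ w ∈ simplex X, ∀ N ∈ 𝒩, i ∈ N → w = revealedType p N i := by
    intro i
    by_cases h : ∃ N ∈ 𝒩, i ∈ N
    · obtain ⟨N₀, hN₀, hi₀⟩ := h
      exact ⟨_, hmem N₀ hN₀ i hi₀, fun N hN hi => hwd N₀ hN₀ N hN i hi₀ hi⟩
    · obtain ⟨w, hw⟩ := simplex_nonempty X
      exact ⟨w, hw, fun N hN hi => absurd ⟨N, hN, hi⟩ h⟩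
  choose v hv using hext
  exact ulmConsistent_iff_exists_eq_revealedType.mpr
    ⟨v, fun i => (hv i).1, fun N hN i hi => (hv i).2 N hN hi⟩

end Characterization

theorem ulm_characterization_variable_sizes_general
    {X A : Type*} [Fintype X] [DecidableEq A]
    (hX : 2 ≤ Fintype.card X)
    (𝒩 : Finset (Finset A))
    (p : Finset A → A → X → ℝ) (hp : ∀ N ∈ 𝒩, ∀ i ∈ N, p N i ∈ simplex X) :
    ULMConsistent 𝒩 p ↔
      CyclicallyConstantStar 𝒩 p ∧ SymmetricPeerEffectsStar 𝒩 p ∧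
        BoundedTotalPeerEffects 𝒩 p := by
  have : Nonempty X := Fintype.card_pos_iff.mp (by omega)
  constructor
  · intro hulm
    obtain ⟨v, hv, hvp⟩ := ulmConsistent_iff_exists_eq_revealedType.mp hulm
    exact ⟨cyclicallyConstantStar_of_eq_revealedType hvp,
      symmetricPeerEffectsStar_of_eq_revealedType hvp,
      boundedTotalPeerEffects_iff.mpr fun N hN i hi => hvp N hN i hi ▸ (hv i).1⟩
  · rintro ⟨hcc, hspe, hbd⟩
    exact ulmConsistent_of_revealedType_mem_simplex
      (fun N hN M hM i => hcc.revealedType_eq hspe hN hM) fun N hN i hi => ⟨boundedTotalPeerEffects_iff.mp hbd N hN i hi,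
        sum_revealedType_apply hi fun j hj => (hp N hN j hj).2⟩

/-- Theorem E.1: characterization of the uniform linear-in-means model with variable
group sizes. -/
theorem ulm_characterization_variable_sizes
    {X A : Type*} [Fintype X] [Fintype A] [DecidableEq A]
    (hX : 2 ≤ Fintype.card X) (hA : 2 ≤ Fintype.card A)
    (𝒩 : Finset (Finset A)) (h𝒩 : 𝒩.Nonempty) (h𝒩' : ∀ N ∈ 𝒩, N.Nonempty)
    (p : Finset A → A → X → ℝ) (hp : ∀ N ∈ 𝒩, ∀ i ∈ N, p N i ∈ simplex X) :
    ULMConsistent 𝒩 p ↔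
      CyclicallyConstantStar 𝒩 p ∧ SymmetricPeerEffectsStar 𝒩 p ∧
        BoundedTotalPeerEffects 𝒩 p :=
  ulm_characterization_variable_sizes_general hX 𝒩 p hp
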